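/- Let (V,*) be a magmatic algebra with * extended to T(V). Then for all f,g,h ∈ T(V): (f*g)*h = Σ f * ((g*h⁽¹⁾) h⁽²⁾), where Δ_⧢(h) = Σ h⁽¹⁾⊗h⁽²⁾. -/

import Mathlib

open scoped TensorProduct

noncomputable section

variable (K V : Type*) [Field K] [AddCommGroup V] [Module K V]

/-- The deshuffling coproduct on the tensor algebra: the unique algebra morphism
sending `x : V` to `x ⊗ 1 + 1 ⊗ x`. -/
def deshuffle : TensorAlgebra K V →ₐ[K]
    TensorAlgebra K V ⊗[K] TensorAlgebra K V :=
  TensorAlgebra.lift K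
    (((TensorProduct.mk K (TensorAlgebra K V) (TensorAlgebra K V)).flip 1) ∘ₗ TensorAlgebra.ι K
      + (TensorProduct.mk K (TensorAlgebra K V) (TensorAlgebra K V) 1) ∘ₗ TensorAlgebra.ι K)

/-- The counit of the tensor algebra: the algebra morphism killing `V`. -/
def tensorCounit : TensorAlgebra K V →ₐ[K] K :=
  TensorAlgebra.lift K (0 : V →ₗ[K] K)

variable {K V}

/-- `star` is the canonical extension to `T(V)` of the magmatic product `m` on `V`:
(i) `f*1 = f`; (ii) `1*f = ε(f)1`; (iii) `x*(fy) = (x*f)*y − x*(f*y)`;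
(iv) `(fg)*h = Σ (f*h⁽¹⁾)(g*h⁽²⁾)`, and `star` restricted to `V` is `m`. -/
def IsMagExt (m : V →ₗ[K] V →ₗ[K] V)
    (star : TensorAlgebra K V →ₗ[K] TensorAlgebra K V →ₗ[K] TensorAlgebra K V) : Prop :=
  (∀ x y : V, star (TensorAlgebra.ι K x) (TensorAlgebra.ι K y) = TensorAlgebra.ι K (m x y)) ∧
  (∀ f, star f 1 = f) ∧
  (∀ f, star 1 f = (tensorCounit K V f) • 1) ∧
  (∀ (x : V) (f : TensorAlgebra K V) (y : V),
    star (TensorAlgebra.ι K x) (f * TensorAlgebra.ι K y)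
      = star (star (TensorAlgebra.ι K x) f) (TensorAlgebra.ι K y)
        - star (TensorAlgebra.ι K x) (star f (TensorAlgebra.ι K y))) ∧
  (∀ f g h, star (f * g) h
      = LinearMap.mul' K (TensorAlgebra K V)
          (TensorProduct.map (star f) (star g) (deshuffle K V h)))


/-- The product `f ⊛ g = Σ (f*g⁽¹⁾) g⁽²⁾` on `T(V)`, as a bilinear map. -/
def circLM (star : TensorAlgebra K V →ₗ[K] TensorAlgebra K V →ₗ[K] TensorAlgebra K V) :
    TensorAlgebra K V →ₗ[K] TensorAlgebra K V →ₗ[K] TensorAlgebra K V where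
  toFun f := LinearMap.mul' K (TensorAlgebra K V)
      ∘ₗ LinearMap.rTensor (TensorAlgebra K V) (star f)
      ∘ₗ (deshuffle K V).toLinearMap
  map_add' f g := by ext h; simp [LinearMap.rTensor_add]
  map_smul' c f := by ext h; simp [LinearMap.rTensor_smul]

/-!
As in the paper, `*` is `star`, juxtaposition is the product of `T(V)`, and a letter `y ∈ V` stands
for `ι y`. Since `f * 1 = f` and `Δ y = y ⊗ 1 + 1 ⊗ y`, the map `u ↦ u * y` is a derivation of
`T(V)`, and `Δ (u * y)` is obtained by applying it to each tensor factor of `Δ u` in turn. With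
these two facts, induction on `f` gives `(f * g) * y = f * (g * y) + f * (g y)`, and a computation
on pure tensors gives `g ⊛ (h * y) + g ⊛ (h y) = (g ⊛ h) * y + (g ⊛ h) y`.
The theorem follows by induction on the degree of a homogeneous `h`: as `h * y` has the degree of
`h`, expanding `((f * g) * h) * y` in two ways and cancelling proves the claim for `h y`.
-/

theorem LinearMap.rTensor_add_lTensor_mul {R A B : Type*} [CommSemiring R] [Semiring A]
    [Algebra R A] [Semiring B] [Algebra R B] {φ : A →ₗ[R] A} {ψ : B →ₗ[R] B}
    (hφ : ∀ a a', φ (a * a') = φ a * a' + a * φ a')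
    (hψ : ∀ b b', ψ (b * b') = ψ b * b' + b * ψ b') (s t : A ⊗[R] B) :
    (φ.rTensor B + ψ.lTensor A) (s * t)
      = (φ.rTensor B + ψ.lTensor A) s * t + s * (φ.rTensor B + ψ.lTensor A) t := by
  induction s using TensorProduct.induction_on with
  | zero => simp
  | add s₁ s₂ h₁ h₂ => simp only [add_mul, map_add, h₁, h₂]; abel
  | tmul a b =>
    induction t using TensorProduct.induction_on with
    | zero => simp
    | add t₁ t₂ h₁ h₂ => simp only [mul_add, map_add, h₁, h₂]; abel
    | tmul a' b' =>
      simp only [Algebra.TensorProduct.tmul_mul_tmul, LinearMap.add_apply, rTensor_tmul,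
        lTensor_tmul, hφ, hψ, add_mul, mul_add, TensorProduct.add_tmul, TensorProduct.tmul_add]
      abel

open TensorAlgebra

local notation "T" => TensorAlgebra K V

theorem tensorCounit_ι (x : V) : tensorCounit K V (ι K x) = 0 := by
  simp [tensorCounit]

theorem deshuffle_ι (x : V) : deshuffle K V (ι K x) = ι K x ⊗ₜ[K] 1 + 1 ⊗ₜ[K] ι K x := by
  simp [deshuffle]

namespace IsMagExt

variable {m : V →ₗ[K] V →ₗ[K] V}

theorem star_ι_ι {star : T →ₗ[K] T →ₗ[K] T} (hs : IsMagExt m star) (x y : V) :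
    star (ι K x) (ι K y) = ι K (m x y) :=
  hs.1 x y

theorem star_one {star : T →ₗ[K] T →ₗ[K] T} (hs : IsMagExt m star) (f : T) : star f 1 = f :=
  hs.2.1 f

theorem one_star {star : T →ₗ[K] T →ₗ[K] T} (hs : IsMagExt m star) (f : T) :
    star 1 f = tensorCounit K V f • 1 :=
  hs.2.2.1 f

theorem ι_star_mul_ι {star : T →ₗ[K] T →ₗ[K] T} (hs : IsMagExt m star) (x : V) (f : T) (y : V) :
    star (ι K x) (f * ι K y) = star (star (ι K x) f) (ι K y) - star (ι K x) (star f (ι K y)) :=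
  hs.2.2.2.1 x f y

theorem mul_star {star : T →ₗ[K] T →ₗ[K] T} (hs : IsMagExt m star) (f g h : T) :
    star (f * g) h = LinearMap.mul' K T (TensorProduct.map (star f) (star g) (deshuffle K V h)) :=
  hs.2.2.2.2 f g h

theorem algebraMap_star_ι {star : T →ₗ[K] T →ₗ[K] T} (hs : IsMagExt m star) (r : K) (y : V) :
    star (algebraMap K T r) (ι K y) = 0 := by
  rw [Algebra.algebraMap_eq_smul_one, map_smul, LinearMap.smul_apply, hs.one_star,
    tensorCounit_ι, zero_smul, smul_zero]

theorem mul_star_ι {star : T →ₗ[K] T →ₗ[K] T} (hs : IsMagExt m star) (u v : T) (y : V) :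
    star (u * v) (ι K y) = star u (ι K y) * v + u * star v (ι K y) := by
  simp [hs.mul_star, deshuffle_ι, hs.star_one]

theorem tensorCounit_star_ι {star : T →ₗ[K] T →ₗ[K] T} (hs : IsMagExt m star) (f : T) (y : V) :
    tensorCounit K V (star f (ι K y)) = 0 := by
  induction f using TensorAlgebra.induction with
  | algebraMap r => rw [hs.algebraMap_star_ι, map_zero]
  | ι x => rw [hs.star_ι_ι, tensorCounit_ι]
  | mul a b ha hb => simp [hs.mul_star_ι, ha, hb]
  | add a b ha hb => rw [map_add, LinearMap.add_apply, map_add, ha, hb, add_zero]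

theorem deshuffle_star_ι {star : T →ₗ[K] T →ₗ[K] T} (hs : IsMagExt m star) (f : T) (y : V) :
    deshuffle K V (star f (ι K y))
      = (LinearMap.rTensor T (star.flip (ι K y)) + LinearMap.lTensor T (star.flip (ι K y)))
          (deshuffle K V f) := by
  induction f using TensorAlgebra.induction with
  | algebraMap r =>
    simp [Algebra.algebraMap_eq_smul_one, Algebra.TensorProduct.one_def,
      hs.one_star, tensorCounit_ι]
  | ι x => simp [hs.star_ι_ι, deshuffle_ι, hs.one_star, tensorCounit_ι]
  | mul a b ha hb =>
    rw [hs.mul_star_ι, map_add, map_mul, map_mul, ha, hb, map_mul,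
      LinearMap.rTensor_add_lTensor_mul (hs.mul_star_ι · · y) (hs.mul_star_ι · · y)]
  | add a b ha hb => simp only [map_add, LinearMap.add_apply, ha, hb]

theorem star_star_ι {star : T →ₗ[K] T →ₗ[K] T} (hs : IsMagExt m star) (y : V) (f g : T) :
    star (star f g) (ι K y) = star f (star g (ι K y)) + star f (g * ι K y) := by
  induction f using TensorAlgebra.induction generalizing g with
  | algebraMap r =>
    simp [Algebra.algebraMap_eq_smul_one, hs.one_star, hs.tensorCounit_star_ι, tensorCounit_ι]
  | ι x => rw [hs.ι_star_mul_ι]; abel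
  | add a b ha hb => simp only [map_add, LinearMap.add_apply, ha, hb]; abel
  | mul a b ha hb =>
    rw [hs.mul_star a b, hs.mul_star a b, hs.mul_star a b, hs.deshuffle_star_ι, map_mul,
      deshuffle_ι]
    induction deshuffle K V g using TensorProduct.induction_on with
    | zero => simp
    | add t₁ t₂ h₁ h₂ => simp only [map_add, add_mul, LinearMap.add_apply, h₁, h₂]; abel
    | tmul u v =>
      simp only [TensorProduct.map_tmul, LinearMap.mul'_apply, LinearMap.add_apply,
        LinearMap.rTensor_tmul, LinearMap.lTensor_tmul, LinearMap.flip_apply, mul_add,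
        Algebra.TensorProduct.tmul_mul_tmul, mul_one, map_add, hs.mul_star_ι, ha, hb,
        add_mul]
      abel

theorem circLM_one {star : T →ₗ[K] T →ₗ[K] T} (hs : IsMagExt m star) (g : T) :
    circLM star g 1 = g := by
  simp [circLM, Algebra.TensorProduct.one_def, hs.star_one]

theorem circLM_star_ι_add_circLM_mul_ι {star : T →ₗ[K] T →ₗ[K] T} (hs : IsMagExt m star)
    (g h : T) (y : V) :
    circLM star g (star h (ι K y)) + circLM star g (h * ι K y)
      = star (circLM star g h) (ι K y) + circLM star g h * ι K y := by
  simp only [circLM, LinearMap.coe_mk, AddHom.coe_mk, LinearMap.comp_apply,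
    AlgHom.toLinearMap_apply, hs.deshuffle_star_ι, map_mul, deshuffle_ι]
  induction deshuffle K V h using TensorProduct.induction_on with
  | zero => simp
  | add t₁ t₂ h₁ h₂ =>
    simp only [map_add, add_mul, LinearMap.add_apply] at h₁ h₂ ⊢
    linear_combination (norm := abel) h₁ + h₂
  | tmul u v =>
    simp only [LinearMap.add_apply, LinearMap.rTensor_tmul, LinearMap.lTensor_tmul,
      LinearMap.flip_apply, LinearMap.mul'_apply, mul_add, Algebra.TensorProduct.tmul_mul_tmul,
      mul_one, map_add, hs.mul_star_ι, hs.star_star_ι, add_mul, mul_assoc]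
    abel

theorem star_ι_mem_pow {star : T →ₗ[K] T →ₗ[K] T} (hs : IsMagExt m star) (y : V) {n : ℕ}
    {a : T} (ha : a ∈ LinearMap.range (ι K : V →ₗ[K] T) ^ n) :
    star a (ι K y) ∈ LinearMap.range (ι K : V →ₗ[K] T) ^ n := by
  induction ha using Submodule.pow_induction_on_right' with
  | algebraMap r => simp [hs.algebraMap_star_ι]
  | add a b i _ _ ha hb => simpa only [map_add, LinearMap.add_apply] using add_mem ha hb
  | mul_mem i a ha ih w hw =>
    obtain ⟨x, rfl⟩ := hw
    rw [hs.mul_star_ι, hs.star_ι_ι]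
    exact add_mem (Submodule.mul_mem_mul ih ⟨x, rfl⟩) (Submodule.mul_mem_mul ha ⟨m x y, rfl⟩)

theorem star_star_mul_ι {star : T →ₗ[K] T →ₗ[K] T} (hs : IsMagExt m star) {a : T} (y : V)
    (ha : ∀ f g, star (star f g) a = star f (circLM star g a))
    (hay : ∀ f g, star (star f g) (star a (ι K y)) = star f (circLM star g (star a (ι K y))))
    (f g : T) :
    star (star f g) (a * ι K y) = star f (circLM star g (a * ι K y)) := by
  have key := hs.star_star_ι y (star f g) a
  rw [ha, hay, hs.star_star_ι, ← map_add, ← hs.circLM_star_ι_add_circLM_mul_ι, map_add] at key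
  exact (add_left_cancel key).symm

theorem star_star_eq_star_circLM_of_mem_pow {star : T →ₗ[K] T →ₗ[K] T} (hs : IsMagExt m star)
    {n : ℕ} {h : T} (hh : h ∈ LinearMap.range (ι K : V →ₗ[K] T) ^ n) (f g : T) :
    star (star f g) h = star f (circLM star g h) := by
  induction n generalizing h f g with
  | zero =>
    obtain ⟨r, rfl⟩ := Submodule.mem_one.mp hh
    simp [Algebra.algebraMap_eq_smul_one, hs.star_one, hs.circLM_one]
  | succ n ih =>
    rw [Submodule.pow_succ] at hh
    induction hh using Submodule.mul_induction_on' generalizing f g with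
    | mem_mul_mem a ha w hw =>
      obtain ⟨y, rfl⟩ := hw
      exact hs.star_star_mul_ι y (ih ha) (ih (hs.star_ι_mem_pow y ha)) f g
    | add a _ b _ ha hb => simp only [map_add, ha, hb]

end IsMagExt

/-- `(f*g)*h = Σ f*((g*h⁽¹⁾)h⁽²⁾)`, i.e. `(f*g)*h = f*(g ⊛ h)`. -/
theorem star_star_eq_star_circ (m : V →ₗ[K] V →ₗ[K] V)
    (star : TensorAlgebra K V →ₗ[K] TensorAlgebra K V →ₗ[K] TensorAlgebra K V)
    (hstar : IsMagExt m star) :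
    ∀ f g h : TensorAlgebra K V,
      star (star f g) h = star f (circLM star g h) := by
  intro f g h
  induction h using DirectSum.Decomposition.inductionOn
    (fun n ↦ LinearMap.range (ι K : V →ₗ[K] TensorAlgebra K V) ^ n) with
  | zero => simp
  | homogeneous h => exact hstar.star_star_eq_star_circLM_of_mem_pow h.property f g
  | add a b ha hb => simp only [map_add, ha, hb]

end
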